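/- arXiv:0812.0096 — 5 statements merged into one kernel-verified Lean document; each statement's English description precedes it below -/
import Mathlib

section
/- If σᵢ : X → X are proper continuous maps for 1 ≤ i ≤ n, then the projection p : X̃ → X given by p(𝐢,𝐱) = x₀ is a proper map (preimages of compact sets are compact). -/
open Set

/-- The space of infinite tails of the multivariable dynamical system `(X, σ)`:
pairs of sequences `(𝐢, 𝐱)` with `σ_{i k}(x_{k+1}) = x_k` for all `k`. -/
def Tails {n : ℕ} {X : Type*} (σ : Fin n → X → X) :
    Set ((ℕ → Fin n) × (ℕ → X)) :=
  {p | ∀ k, σ (p.1 k) (p.2 (k + 1)) = p.2 k}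

/-- Prepend an element to a sequence. -/
def prepend {α : Type*} (a : α) (s : ℕ → α) : ℕ → α
  | 0 => a
  | k + 1 => s k

/-- The lifted map `σ̃ᵢ(𝐢,𝐱) = (i𝐢, (σᵢ(x₀), 𝐱))` on the ambient product space. -/
def tildeσ {n : ℕ} {X : Type*} (σ : Fin n → X → X) (i : Fin n)
    (p : (ℕ → Fin n) × (ℕ → X)) : (ℕ → Fin n) × (ℕ → X) :=
  (prepend i p.1, prepend (σ i (p.2 0)) p.2)

/-- The shift map `τ(𝐢,𝐱) = ((i₁,i₂,…),(x₁,x₂,…))`. -/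
def tau {n : ℕ} {X : Type*} (p : (ℕ → Fin n) × (ℕ → X)) :
    (ℕ → Fin n) × (ℕ → X) :=
  (fun k => p.1 (k + 1), fun k => p.2 (k + 1))

/-- For a word `w = i₁…i_k`, the map `σ̃_w = σ̃_{i₁} ∘ ⋯ ∘ σ̃_{i_k}`. -/
def tildeσW {n : ℕ} {X : Type*} (σ : Fin n → X → X) (w : List (Fin n)) :
    (ℕ → Fin n) × (ℕ → X) → (ℕ → Fin n) × (ℕ → X) :=
  w.foldr (fun i f => tildeσ σ i ∘ f) id

/-!
If `(𝐢, 𝐱)` is a tail with `x₀ ∈ K`, then `x_k` lies in `K_k := ⋃_{|w| = k} σ_w⁻¹(K)`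
(`levelPreimage σ K k`), which is compact because the `σᵢ` are proper. So the preimage of `K`
is a closed subset of the compact product `(Fin n)^ℕ × ∏ₖ K_k`; it is closed because the
defining equations involve continuous maps into a Hausdorff space and finitely many indices.
-/

def levelPreimage {ι X : Type*} (σ : ι → X → X) (K : Set X) : ℕ → Set X
  | 0 => K
  | k + 1 => ⋃ i, σ i ⁻¹' levelPreimage σ K k

lemma isCompact_levelPreimage {ι X : Type*} [Finite ι] [TopologicalSpace X]
    {σ : ι → X → X} (hσ : ∀ i, IsProperMap (σ i)) {K : Set X} (hK : IsCompact K) :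
    ∀ k, IsCompact (levelPreimage σ K k)
  | 0 => hK
  | k + 1 => isCompact_iUnion fun i =>
      (hσ i).isCompact_preimage (isCompact_levelPreimage hσ hK k)

lemma isClosed_tails {n : ℕ} {X : Type*} [TopologicalSpace X] [T2Space X]
    {σ : Fin n → X → X} (hσ : ∀ i, Continuous (σ i)) : IsClosed (Tails σ) := by
  have hσ' : Continuous fun q : Fin n × X => σ q.1 q.2 :=
    continuous_prod_of_discrete_left.mpr hσ
  simp only [Tails, ofPred_forall]
  refine isClosed_iInter fun k => isClosed_eq ?_ ((continuous_apply k).comp continuous_snd)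
  exact hσ'.comp (f := fun p : (ℕ → Fin n) × (ℕ → X) => (p.1 k, p.2 (k + 1))) (by fun_prop)

lemma apply_mem_levelPreimage_of_mem_tails {n : ℕ} {X : Type*} {σ : Fin n → X → X}
    {K : Set X} {p : (ℕ → Fin n) × (ℕ → X)} (hp : p ∈ Tails σ) (hp0 : p.2 0 ∈ K) :
    ∀ k, p.2 k ∈ levelPreimage σ K k
  | 0 => hp0
  | k + 1 => mem_iUnion.mpr ⟨p.1 k, by
      rw [mem_preimage, hp k]; exact apply_mem_levelPreimage_of_mem_tails hp hp0 k⟩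

theorem stmt_4_general {n : ℕ} {X : Type*} [TopologicalSpace X] [T2Space X]
    (σ : Fin n → X → X)
    (hprop : ∀ i, IsProperMap (σ i)) :
    ∀ K : Set X, IsCompact K → IsCompact {p ∈ Tails σ | p.2 0 ∈ K} := by
  intro K hK
  have hbox : IsCompact ((univ : Set (ℕ → Fin n)) ×ˢ univ.pi (levelPreimage σ K)) :=
    isCompact_univ.prod (isCompact_univ_pi (isCompact_levelPreimage hprop hK))
  have hclosed : IsClosed {p ∈ Tails σ | p.2 0 ∈ K} :=
    (isClosed_tails fun i => (hprop i).continuous).inter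
      (hK.isClosed.preimage ((continuous_apply 0).comp continuous_snd))
  refine hbox.of_isClosed_subset hclosed ?_
  rintro p ⟨hp, hp0⟩
  exact ⟨mem_univ _, fun k _ => apply_mem_levelPreimage_of_mem_tails hp hp0 k⟩

/-- If the `σᵢ` are proper continuous maps, then the projection
`p : X̃ → X`, `p(𝐢,𝐱) = x₀`, is proper: preimages of compact sets are compact. -/
theorem stmt_4 {n : ℕ} {X : Type*} [TopologicalSpace X] [T2Space X]
    [LocallyCompactSpace X] (σ : Fin n → X → X)
    (hσ : ∀ i, Continuous (σ i)) (hprop : ∀ i, IsProperMap (σ i)) :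
    ∀ K : Set X, IsCompact K → IsCompact {p ∈ Tails σ | p.2 0 ∈ K} :=
  stmt_4_general σ hprop
end

section
/- Every point of X̃ is the start of a unique infinite tail for the system (X̃, σ̃); consequently the covering system of X̃ is canonically homeomorphic to X̃ itself (i.e., X̃̃ ≅ X̃ via the natural projection). -/
open Set

/-- `σ̃ᵢ` as a self-map of the tails space `X̃`. -/
def tildeσSub {n : ℕ} {X : Type*} (σ : Fin n → X → X) (i : Fin n)
    (z : Tails σ) : Tails σ :=
  ⟨tildeσ σ i z.1, by
    intro k
    cases k with
    | zero => rfl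
    | succ m => exact z.2 m⟩

/-- `τ` as a self-map of the tails space `X̃`. -/
def tauSub {n : ℕ} {X : Type*} (σ : Fin n → X → X) (z : Tails σ) : Tails σ :=
  ⟨tau z.1, fun k => z.2 (k + 1)⟩

/-!
A point `z = (𝐢, 𝐱)` of `X̃` has exactly one `σ̃`-preimage: `σ̃ᵢ w = z` forces `i = i₀` and
`w = τ z`. Hence an infinite tail in `X̃` starting at `z` is forced to be the `τ`-orbit of `z`,
labelled by the first letters of its points; and the inverse `z ↦ (τᵏ z)ₖ` of the projection onto
the starting point is continuous because `τ` and `z ↦ i₀` are.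
-/

section Tails

variable {n : ℕ} {Y : Type*} {σ : Fin n → Y → Y} {ℓ : Y → Fin n} {τ : Y → Y}

def tailAlong (ℓ : Y → Fin n) (τ : Y → Y) (y : Y) : (ℕ → Fin n) × (ℕ → Y) :=
  (fun k => ℓ (τ^[k] y), fun k => τ^[k] y)

lemma tailAlong_mem_tails (hsec : ∀ y, σ (ℓ y) (τ y) = y) (y : Y) :
    tailAlong ℓ τ y ∈ Tails σ := fun k => by
  simp only [tailAlong, Function.iterate_succ_apply', hsec]

lemma eq_tailAlong_of_mem_tails (hℓ : ∀ i w, ℓ (σ i w) = i) (hτ : ∀ i w, τ (σ i w) = w)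
    {t : (ℕ → Fin n) × (ℕ → Y)} (ht : t ∈ Tails σ) : t = tailAlong ℓ τ (t.2 0) := by
  have hpoint : ∀ k, t.2 k = τ^[k] (t.2 0) := by
    intro k
    induction k with
    | zero => rfl
    | succ k ih => rw [Function.iterate_succ_apply', ← ih, ← ht k, hτ]
  refine Prod.ext (funext fun k => ?_) (funext hpoint)
  show t.1 k = ℓ (τ^[k] (t.2 0))
  rw [← hpoint, ← ht k, hℓ]

theorem existsUnique_tail (hℓ : ∀ i w, ℓ (σ i w) = i) (hτ : ∀ i w, τ (σ i w) = w)
    (hsec : ∀ y, σ (ℓ y) (τ y) = y) (y : Y) :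
    ∃! t : (ℕ → Fin n) × (ℕ → Y), t ∈ Tails σ ∧ t.2 0 = y := by
  refine ⟨tailAlong ℓ τ y, ⟨tailAlong_mem_tails hsec y, rfl⟩, ?_⟩
  rintro t ⟨ht, rfl⟩
  exact eq_tailAlong_of_mem_tails hℓ hτ ht

variable [TopologicalSpace Y]

def tailsHomeomorph (hℓ : ∀ i w, ℓ (σ i w) = i) (hτ : ∀ i w, τ (σ i w) = w)
    (hsec : ∀ y, σ (ℓ y) (τ y) = y) (hℓc : Continuous ℓ) (hτc : Continuous τ) :
    Tails σ ≃ₜ Y where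
  toFun t := t.1.2 0
  invFun y := ⟨tailAlong ℓ τ y, tailAlong_mem_tails hsec y⟩
  left_inv t := Subtype.ext (eq_tailAlong_of_mem_tails hℓ hτ t.2).symm
  right_inv _ := rfl
  continuous_toFun := by fun_prop
  continuous_invFun := by
    refine Continuous.subtype_mk (.prodMk ?_ ?_) _
    · exact continuous_pi fun k => hℓc.comp (hτc.iterate k)
    · exact continuous_pi fun k => hτc.iterate k

end Tails

section CoveringSystem

variable {n : ℕ} {X : Type*} (σ : Fin n → X → X)

lemma tildeσSub_head (i : Fin n) (w : Tails σ) : (tildeσSub σ i w).1.1 0 = i := rfl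

lemma tauSub_tildeσSub (i : Fin n) (w : Tails σ) : tauSub σ (tildeσSub σ i w) = w := rfl

lemma tildeσSub_head_tauSub (z : Tails σ) : tildeσSub σ (z.1.1 0) (tauSub σ z) = z := by
  refine Subtype.ext (Prod.ext (funext fun k => ?_) (funext fun k => ?_))
  · cases k <;> rfl
  · cases k
    · exact z.2 0
    · rfl

variable [TopologicalSpace X]

lemma continuous_tauSub : Continuous (tauSub σ) := by
  unfold tauSub tau
  fun_prop

end CoveringSystem

theorem stmt_7_general {n : ℕ} {X : Type*} [TopologicalSpace X] (σ : Fin n → X → X) :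
    (∀ z : Tails σ, ∃! t : (ℕ → Fin n) × (ℕ → ↥(Tails σ)),
        t ∈ Tails (tildeσSub σ) ∧ t.2 0 = z) ∧
      ∃ e : ↥(Tails (tildeσSub σ)) ≃ₜ ↥(Tails σ),
        ∀ t : ↥(Tails (tildeσSub σ)),
          e t = ((t : (ℕ → Fin n) × (ℕ → ↥(Tails σ))).2 0 : ↥(Tails σ)) :=
  ⟨existsUnique_tail (tildeσSub_head σ) (tauSub_tildeσSub σ) (tildeσSub_head_tauSub σ),
    ⟨tailsHomeomorph (tildeσSub_head σ) (tauSub_tildeσSub σ) (tildeσSub_head_tauSub σ)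
      (by fun_prop) (continuous_tauSub σ), fun _ => rfl⟩⟩

/-- Every point of `X̃` begins a unique infinite tail of `(X̃, σ̃)`; consequently
the covering system of `X̃` is canonically homeomorphic to `X̃` via the natural
projection. -/
theorem stmt_7 {n : ℕ} {X : Type*} [TopologicalSpace X] [T2Space X]
    [LocallyCompactSpace X] (σ : Fin n → X → X) (hσ : ∀ i, Continuous (σ i)) :
    (∀ z : Tails σ, ∃! t : (ℕ → Fin n) × (ℕ → ↥(Tails σ)),
        t ∈ Tails (tildeσSub σ) ∧ t.2 0 = z) ∧
      ∃ e : ↥(Tails (tildeσSub σ)) ≃ₜ ↥(Tails σ),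
        ∀ t : ↥(Tails (tildeσSub σ)),
          e t = ((t : (ℕ → Fin n) × (ℕ → ↥(Tails σ))).2 0 : ↥(Tails σ)) :=
  stmt_7_general σ
end

section
/- If B ⊆ X̃ is a nonempty closed invariant set (σ̃ᵢ(B) ⊆ B for all i), then B_∞ = ⋂_{k≥0} B_k, where B₀ = B and B_{k+1} = ⋃_{i=1}^n σ̃ᵢ(B_k), is a nonempty closed bi-invariant set (invariant and σ̃ᵢ⁻¹(B_∞) ⊆ B_∞ for all i). Hence if (X̃,σ̃) has no proper nonempty closed bi-invariant subsets, it is minimal. -/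
open Set

/-
The sets `B_k` decrease, since `B₁ = ⋃ᵢ σ̃ᵢ(B) ⊆ B` and taking `⋃ᵢ σ̃ᵢ(·)` is monotone. Each `B_k`
is a nonempty compact set (at least one `σ̃ᵢ` exists because `σ` is surjective), so their
intersection `B_∞` is nonempty and closed. Invariance is inherited from `σ̃ᵢ(B_∞) ⊆ σ̃ᵢ(B_k) ⊆
B_{k+1} ⊆ B_k`. For bi-invariance, if `σ̃ᵢ(p) ∈ B_{k+1}` then `σ̃ᵢ(p) = σ̃ⱼ(q)` with `q ∈ B_k`;
since the `σ̃ⱼ` are injective with disjoint ranges, `p = q ∈ B_k`. Minimality follows by applying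
this to a nonempty closed invariant `C`: the bi-invariant set `C_∞ ⊆ C` must be all of `X̃`.
-/

namespace UnionImageSeq

open Function

variable {α ι : Type*} {f : ι → α → α} {B : Set α} {Bk : ℕ → Set α}

theorem antitone (h0 : Bk 0 = B) (hsucc : ∀ k, Bk (k + 1) = ⋃ i, f i '' Bk k)
    (hinv : ∀ i, f i '' B ⊆ B) : Antitone Bk := by
  refine antitone_nat_of_succ_le fun k => ?_
  induction k with
  | zero => simpa only [hsucc 0, h0] using iUnion_subset hinv
  | succ k ih =>
    calc Bk (k + 2) = ⋃ i, f i '' Bk (k + 1) := hsucc (k + 1)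
      _ ⊆ ⋃ i, f i '' Bk k := iUnion_mono fun i => image_mono ih
      _ = Bk (k + 1) := (hsucc k).symm

theorem nonempty [Nonempty ι] (h0 : Bk 0 = B)
    (hsucc : ∀ k, Bk (k + 1) = ⋃ i, f i '' Bk k) (hB : B.Nonempty) (k : ℕ) :
    (Bk k).Nonempty := by
  induction k with
  | zero => exact h0 ▸ hB
  | succ k ih =>
    rw [hsucc k]
    exact (ih.image _).mono (subset_iUnion (fun i => f i '' Bk k) (Classical.arbitrary ι))

theorem isClosed [TopologicalSpace α] [CompactSpace α] [T2Space α] [Finite ι]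
    (hf : ∀ i, Continuous (f i)) (h0 : Bk 0 = B) (hsucc : ∀ k, Bk (k + 1) = ⋃ i, f i '' Bk k)
    (hB : IsClosed B) (k : ℕ) : IsClosed (Bk k) := by
  induction k with
  | zero => exact h0 ▸ hB
  | succ k ih =>
    rw [hsucc k]
    exact (isCompact_iUnion fun i => ih.isCompact.image (hf i)).isClosed

theorem image_iInter_subset (hsucc : ∀ k, Bk (k + 1) = ⋃ i, f i '' Bk k)
    (hanti : Antitone Bk) (i : ι) : f i '' ⋂ k, Bk k ⊆ ⋂ k, Bk k := by
  refine subset_iInter fun k => ?_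
  calc f i '' ⋂ k, Bk k ⊆ f i '' Bk k := image_mono (iInter_subset Bk k)
    _ ⊆ Bk (k + 1) := hsucc k ▸ subset_iUnion (fun j => f j '' Bk k) i
    _ ⊆ Bk k := hanti k.le_succ

theorem preimage_iInter_subset (hinj : ∀ i, Injective (f i))
    (hdisj : Pairwise (Disjoint on fun i => range (f i)))
    (hsucc : ∀ k, Bk (k + 1) = ⋃ i, f i '' Bk k) (i : ι) : f i ⁻¹' ⋂ k, Bk k ⊆ ⋂ k, Bk k := by
  intro p hp
  refine mem_iInter.mpr fun k => ?_
  have hp' := mem_iInter.mp hp (k + 1)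
  rw [hsucc k, mem_iUnion] at hp'
  obtain ⟨j, q, hq, hqp⟩ := hp'
  obtain rfl : j = i := by
    by_contra hji
    exact (hdisj hji).ne_of_mem (mem_range_self q) (mem_range_self p) hqp
  exact hinj j hqp ▸ hq

end UnionImageSeq

section Tails

open Function

variable {n : ℕ} {X : Type*} (σ : Fin n → X → X)

theorem continuous_tildeσ [TopologicalSpace X] (hσ : ∀ i, Continuous (σ i)) (i : Fin n) :
    Continuous (tildeσ σ i) := by
  refine .prodMk (continuous_pi fun k => ?_) (continuous_pi fun k => ?_)
  · cases k with
    | zero => exact continuous_const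
    | succ k => exact (continuous_apply k).comp continuous_fst
  · cases k with
    | zero => exact (hσ i).comp ((continuous_apply 0).comp continuous_snd)
    | succ k => exact (continuous_apply k).comp continuous_snd

theorem tildeσ_injective (i : Fin n) : Injective (tildeσ σ i) := fun _ _ h =>
  Prod.ext (funext fun k => congrFun (congrArg Prod.fst h) (k + 1))
    (funext fun k => congrFun (congrArg Prod.snd h) (k + 1))

theorem pairwise_disjoint_range_tildeσ :
    Pairwise (Disjoint on fun i => range (tildeσ σ i)) := by
  intro i j hij
  refine disjoint_left.mpr ?_
  rintro _ ⟨_, rfl⟩ ⟨_, hqp⟩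
  exact hij (congrFun (congrArg Prod.fst hqp) 0).symm

theorem nonempty_isClosed_biInvariant_iInter [TopologicalSpace X] [CompactSpace X] [T2Space X]
    (hσ : ∀ i, Continuous (σ i)) (hsurj : ∀ x : X, ∃ i y, σ i y = x)
    {C : Set ((ℕ → Fin n) × (ℕ → X))} (hCsub : C ⊆ Tails σ) (hCne : C.Nonempty)
    (hCcl : IsClosed C) (hCinv : ∀ i, tildeσ σ i '' C ⊆ C)
    {Ck : ℕ → Set ((ℕ → Fin n) × (ℕ → X))} (h0 : Ck 0 = C)
    (hsucc : ∀ k, Ck (k + 1) = ⋃ i, tildeσ σ i '' Ck k) :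
    (⋂ k, Ck k).Nonempty ∧ IsClosed (⋂ k, Ck k) ∧ (⋂ k, Ck k) ⊆ Tails σ ∧
      (∀ i, tildeσ σ i '' (⋂ k, Ck k) ⊆ ⋂ k, Ck k) ∧
      ∀ i, Tails σ ∩ tildeσ σ i ⁻¹' (⋂ k, Ck k) ⊆ ⋂ k, Ck k := by
  have : Nonempty (Fin n) := let ⟨i, _⟩ := hsurj (hCne.some.2 0); ⟨i⟩
  have hanti := UnionImageSeq.antitone h0 hsucc hCinv
  have hcl := UnionImageSeq.isClosed (continuous_tildeσ σ hσ) h0 hsucc hCcl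
  refine ⟨?_, isClosed_iInter hcl, (iInter_subset Ck 0).trans (h0 ▸ hCsub),
    UnionImageSeq.image_iInter_subset hsucc hanti, fun i =>
      inter_subset_right.trans (UnionImageSeq.preimage_iInter_subset (tildeσ_injective σ)
        (pairwise_disjoint_range_tildeσ σ) hsucc i)⟩
  exact IsCompact.nonempty_iInter_of_sequence_nonempty_isCompact_isClosed Ck
    (fun k => hanti k.le_succ) (UnionImageSeq.nonempty h0 hsucc hCne) (hcl 0).isCompact hcl

end Tails

/-- If `B ⊆ X̃` is a nonempty closed invariant set, then `B_∞ = ⋂_k B_k`, where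
`B₀ = B` and `B_{k+1} = ⋃ᵢ σ̃ᵢ(B_k)`, is a nonempty closed bi-invariant set.
Hence if `(X̃, σ̃)` has no proper nonempty closed bi-invariant subsets, it is
minimal. -/
theorem stmt_13 {n : ℕ} {X : Type*} [TopologicalSpace X] [CompactSpace X]
    [T2Space X] (σ : Fin n → X → X) (hσ : ∀ i, Continuous (σ i))
    (hsurj : ∀ x : X, ∃ i y, σ i y = x)
    (B : Set ((ℕ → Fin n) × (ℕ → X))) (hBsub : B ⊆ Tails σ) (hBne : B.Nonempty)
    (hBcl : IsClosed B) (hBinv : ∀ i, tildeσ σ i '' B ⊆ B) :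
    (∀ Bk : ℕ → Set ((ℕ → Fin n) × (ℕ → X)), Bk 0 = B →
      (∀ k, Bk (k + 1) = ⋃ i, tildeσ σ i '' Bk k) →
      (⋂ k, Bk k).Nonempty ∧ IsClosed (⋂ k, Bk k) ∧ (⋂ k, Bk k) ⊆ Tails σ ∧
        (∀ i, tildeσ σ i '' (⋂ k, Bk k) ⊆ ⋂ k, Bk k) ∧
        ∀ i, Tails σ ∩ tildeσ σ i ⁻¹' (⋂ k, Bk k) ⊆ ⋂ k, Bk k) ∧
    ((∀ C : Set ((ℕ → Fin n) × (ℕ → X)), C ⊆ Tails σ → C.Nonempty →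
        IsClosed C → (∀ i, tildeσ σ i '' C ⊆ C) →
        (∀ i, Tails σ ∩ tildeσ σ i ⁻¹' C ⊆ C) → C = Tails σ) →
      ∀ C : Set ((ℕ → Fin n) × (ℕ → X)), C ⊆ Tails σ → IsClosed C →
        (∀ i, tildeσ σ i '' C ⊆ C) → C = ∅ ∨ C = Tails σ) := by
  refine ⟨fun Bk h0 hsucc => nonempty_isClosed_biInvariant_iInter σ hσ hsurj hBsub hBne hBcl
    hBinv h0 hsucc, fun hmin C hCsub hCcl hCinv => ?_⟩
  refine C.eq_empty_or_nonempty.imp id fun hCne => hCsub.antisymm ?_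
  let Ck k := (fun S => ⋃ i, tildeσ σ i '' S)^[k] C
  obtain ⟨hne, hcl, hsub, hinv, hbi⟩ := nonempty_isClosed_biInvariant_iInter σ hσ hsurj hCsub hCne
    hCcl hCinv (Ck := Ck) rfl fun k => Function.iterate_succ_apply' _ k C
  exact hmin _ hsub hne hcl hinv hbi ▸ iInter_subset Ck 0
end

section
/- If (X,σ) is a minimal compact multivariable dynamical system, then the covering system (X̃,σ̃) is minimal: for every point (𝐢,𝐱) ∈ X̃, the forward orbit {σ̃_w(𝐢,𝐱) : w a word in {1,…,n}} is dense in X̃. -/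
open Set

/-- For a word `w = i₁…i_k`, the composition `σ_w = σ_{i₁} ∘ ⋯ ∘ σ_{i_k}`. -/
def sigmaW {n : ℕ} {X : Type*} (σ : Fin n → X → X) (w : List (Fin n)) : X → X :=
  w.foldr (fun i f => σ i ∘ f) id

/-!
A basic neighbourhood of a tail `(𝐢, 𝐱)` constrains only the coordinates up to some `N`. For any
word `w`, the point `σ̃_{i₀ ⋯ i_{N-1}}(σ̃_w(𝐳))` has first letters `i₀, …, i_{N-1}`, and its first
points are the images of its `N`-th point `σ_w(z₀)` under fixed continuous maps that send `x_N`
to `x₀, …, x_N`. Minimality lets us choose `w` with `σ_w(z₀)` as close to `x_N` as needed.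
Formally this is an induction on `N` that peels off one letter with the shift `τ`.
-/

open Filter Topology

lemma exists_Iic_pi_subset_of_mem_nhds {α : Type*} [TopologicalSpace α] {f : ℕ → α}
    {U : Set (ℕ → α)} (hU : U ∈ 𝓝 f) :
    ∃ N, ∃ V : ℕ → Set α, (∀ k, V k ∈ 𝓝 (f k)) ∧ (Iic N).pi V ⊆ U := by
  rw [nhds_pi, Filter.mem_pi] at hU
  obtain ⟨I, hI, V, hV, hVU⟩ := hU
  obtain ⟨N, hN⟩ := hI.bddAbove
  exact ⟨N, V, hV, (pi_mono' (fun _ _ => Subset.rfl) hN).trans hVU⟩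

section Covering

variable {n : ℕ} {X : Type*} (σ : Fin n → X → X)

lemma snd_tildeσW_zero (w : List (Fin n)) (z : (ℕ → Fin n) × (ℕ → X)) :
    (tildeσW σ w z).2 0 = sigmaW σ w (z.2 0) := by
  induction w with
  | nil => rfl
  | cons i w ih => exact congrArg (σ i) ih

variable {σ}

lemma tau_mem_Tails {t : (ℕ → Fin n) × (ℕ → X)} (ht : t ∈ Tails σ) : tau t ∈ Tails σ :=
  fun k => ht (k + 1)

lemma exists_tildeσW_mem_of_dense [TopologicalSpace X] (hσ : ∀ i, Continuous (σ i))
    {z : (ℕ → Fin n) × (ℕ → X)} (hz : Dense {y | ∃ w : List (Fin n), sigmaW σ w (z.2 0) = y})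
    (N : ℕ) {t : (ℕ → Fin n) × (ℕ → X)} (ht : t ∈ Tails σ) {V : ℕ → Set X}
    (hV : ∀ k, V k ∈ 𝓝 (t.2 k)) :
    ∃ w : List (Fin n), (∀ k < N, (tildeσW σ w z).1 k = t.1 k) ∧
      ∀ k ≤ N, (tildeσW σ w z).2 k ∈ V k := by
  induction N generalizing t V with
  | zero =>
    obtain ⟨_, ⟨w, rfl⟩, hwV⟩ := hz.inter_nhds_nonempty (hV 0)
    refine ⟨w, fun k hk => absurd hk (Nat.not_lt_zero k), fun k hk => ?_⟩
    rw [Nat.le_zero.mp hk, snd_tildeσW_zero]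
    exact hwV
  | succ N ih =>
    -- Shrinking `V (k + 1)` into `σ_{i_k}⁻¹' V k` lets the prepended letter `i₀` keep coordinate `0` in `V 0`.
    have hV' : ∀ k, V (k + 1) ∩ σ (t.1 k) ⁻¹' V k ∈ 𝓝 ((tau t).2 k) := fun k =>
      inter_mem (hV (k + 1)) ((hσ (t.1 k)).continuousAt.preimage_mem_nhds (ht k ▸ hV k))
    obtain ⟨w, hfst, hsnd⟩ := ih (tau_mem_Tails ht) hV'
    refine ⟨t.1 0 :: w, fun k hk => ?_, fun k hk => ?_⟩
    · cases k with
      | zero => rfl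
      | succ k => exact hfst k (Nat.succ_lt_succ_iff.mp hk)
    · cases k with
      | zero => exact (hsnd 0 (Nat.zero_le N)).2
      | succ k => exact (hsnd k (Nat.succ_le_succ_iff.mp hk)).1

end Covering

theorem stmt_14_general {n : ℕ} {X : Type*} [TopologicalSpace X]
    (σ : Fin n → X → X) (hσ : ∀ i, Continuous (σ i))
    (hmin : ∀ x : X, Dense {y | ∃ w : List (Fin n), sigmaW σ w x = y}) :
    ∀ z ∈ Tails σ,
      Tails σ ⊆ closure {t | ∃ w : List (Fin n), tildeσW σ w z = t} := by
  intro z _ t ht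
  rw [mem_closure_iff_nhds]
  intro U hU
  obtain ⟨A, hA, B, hB, hABU⟩ := mem_nhds_prod_iff.mp hU
  obtain ⟨M, VA, hVA, hVAA⟩ := exists_Iic_pi_subset_of_mem_nhds hA
  obtain ⟨N, VB, hVB, hVBB⟩ := exists_Iic_pi_subset_of_mem_nhds hB
  obtain ⟨w, hfst, hsnd⟩ :=
    exists_tildeσW_mem_of_dense hσ (hmin (z.2 0)) (max M N + 1) ht hVB
  refine ⟨tildeσW σ w z, hABU ⟨hVAA fun k hk => ?_, hVBB fun k hk => ?_⟩, w, rfl⟩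
  · rw [hfst k (Nat.lt_succ_of_le (le_max_of_le_left hk))]
    exact mem_of_mem_nhds (hVA k)
  · exact hsnd k ((le_max_of_le_right hk).trans (Nat.le_succ _))

/-- If `(X, σ)` is a minimal compact system (every forward orbit is dense),
then the covering system `(X̃, σ̃)` is minimal: every forward orbit
`{σ̃_w(𝐢,𝐱) : w}` is dense in `X̃`. -/
theorem stmt_14 {n : ℕ} {X : Type*} [TopologicalSpace X] [CompactSpace X]
    [T2Space X] (σ : Fin n → X → X) (hσ : ∀ i, Continuous (σ i))
    (hmin : ∀ x : X, Dense {y | ∃ w : List (Fin n), sigmaW σ w x = y}) :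
    ∀ z ∈ Tails σ,
      Tails σ ⊆ closure {t | ∃ w : List (Fin n), tildeσW σ w z = t} :=
  stmt_14_general σ hσ hmin
end

section
/- If F ⊆ X̃ is a closed invariant subset (σ̃ᵢ(F) ⊆ F for all i) that is also robust and τ-invariant, and F is defined with F_k = τ^k(F), then each F_k is robust and satisfies F_k = ⋃_{i=1}^n σ̃ᵢ(F_{k+1}) and F_{k+1} = τ(F_k); moreover F = ⋃_{|w|=k} σ̃_w(F_k) for each k. -/
open Set

/-- A set `F ⊆ X̃` is robust if it contains `σ̃_w(τ^{|w|}(x))` for every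
`x ∈ F` and every word `w`. -/
def Robust {n : ℕ} {X : Type*} (σ : Fin n → X → X)
    (F : Set ((ℕ → Fin n) × (ℕ → X))) : Prop :=
  ∀ x ∈ F, ∀ w : List (Fin n), tildeσW σ w (tau^[w.length] x) ∈ F

/-! Every robust set `G` of infinite tails is recovered from `τ^k(G)`: a tail `p` equals
`σ̃_w(τ^k p)` for the word `w` of its first `k` symbols, and conversely robustness says precisely
that `σ̃_w(τ^k p)` stays in `G` for every word `w` of length `k`. Robustness passes to `τ^k(G)`
because `σ̃_w τ^{|w|} τ^k x = τ^k σ̃_{vw} τ^{|vw|} x` for any word `v` of length `k`. -/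

section Tails

variable {n : ℕ} {X : Type*} (σ : Fin n → X → X)

lemma tau_tildeσ (i : Fin n) (p : (ℕ → Fin n) × (ℕ → X)) : tau (tildeσ σ i p) = p := by
  ext k <;> rfl

lemma tildeσW_cons (i : Fin n) (w : List (Fin n)) (p : (ℕ → Fin n) × (ℕ → X)) :
    tildeσW σ (i :: w) p = tildeσ σ i (tildeσW σ w p) := rfl

lemma tildeσW_append (v w : List (Fin n)) (p : (ℕ → Fin n) × (ℕ → X)) :
    tildeσW σ (v ++ w) p = tildeσW σ v (tildeσW σ w p) := by
  induction v with
  | nil => rfl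
  | cons i v ih => rw [List.cons_append, tildeσW_cons, tildeσW_cons, ih]

lemma iterate_tau_tildeσW (w : List (Fin n)) (p : (ℕ → Fin n) × (ℕ → X)) :
    tau^[w.length] (tildeσW σ w p) = p := by
  induction w with
  | nil => rfl
  | cons i w ih =>
    rw [tildeσW_cons, List.length_cons, Function.iterate_succ_apply, tau_tildeσ, ih]

variable {σ}

lemma tau_mem_tails {p : (ℕ → Fin n) × (ℕ → X)} (hp : p ∈ Tails σ) : tau p ∈ Tails σ :=
  fun k => hp (k + 1)

lemma iterate_tau_mem_tails {p : (ℕ → Fin n) × (ℕ → X)} (hp : p ∈ Tails σ) (k : ℕ) :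
    tau^[k] p ∈ Tails σ := by
  induction k with
  | zero => exact hp
  | succ k ih => rw [Function.iterate_succ_apply']; exact tau_mem_tails ih

lemma tildeσ_tau {p : (ℕ → Fin n) × (ℕ → X)} (hp : p ∈ Tails σ) :
    tildeσ σ (p.1 0) (tau p) = p := by
  refine Prod.ext ?_ ?_ <;> funext k <;> cases k with
  | zero => first | rfl | exact hp 0
  | succ k => rfl

lemma tildeσW_ofFn_iterate_tau (k : ℕ) {p : (ℕ → Fin n) × (ℕ → X)} (hp : p ∈ Tails σ) :
    tildeσW σ (List.ofFn fun j : Fin k => p.1 j) (tau^[k] p) = p := by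
  induction k generalizing p with
  | zero => rfl
  | succ k ih =>
    have hword : (List.ofFn fun j : Fin (k + 1) => p.1 j)
        = p.1 0 :: List.ofFn (fun j : Fin k => (tau p).1 j) := by
      rw [List.ofFn_succ]
      rfl
    rw [hword, tildeσW_cons, Function.iterate_succ_apply, ih (tau_mem_tails hp),
      tildeσ_tau hp]

end Tails

namespace Robust

variable {n : ℕ} {X : Type*} {σ : Fin n → X → X} {G : Set ((ℕ → Fin n) × (ℕ → X))}

lemma image_iterate_tau (hG : Robust σ G) (k : ℕ) : Robust σ (tau^[k] '' G) := by
  rintro _ ⟨y, hy, rfl⟩ w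
  obtain ⟨v, rfl⟩ : ∃ v : List (Fin n), v.length = k :=
    ⟨List.ofFn fun j : Fin k => y.1 j, List.length_ofFn⟩
  refine ⟨_, hG y hy (v ++ w), ?_⟩
  rw [tildeσW_append, iterate_tau_tildeσW, List.length_append, Nat.add_comm,
    Function.iterate_add_apply]

lemma eq_iUnion_tildeσ_image_tau (hG : Robust σ G) (hGt : G ⊆ Tails σ) :
    G = ⋃ i, tildeσ σ i '' (tau '' G) := by
  ext p
  constructor
  · intro hp
    exact mem_iUnion.2 ⟨p.1 0, tau p, mem_image_of_mem tau hp, tildeσ_tau (hGt hp)⟩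
  · intro hp
    obtain ⟨i, _, ⟨q, hq, rfl⟩, rfl⟩ := mem_iUnion.1 hp
    exact hG q hq [i]

lemma eq_biUnion_tildeσW_image_iterate_tau (hG : Robust σ G) (hGt : G ⊆ Tails σ) (k : ℕ) :
    G = ⋃ w ∈ {w : List (Fin n) | w.length = k}, tildeσW σ w '' (tau^[k] '' G) := by
  ext p
  constructor
  · intro hp
    refine mem_biUnion (x := List.ofFn fun j : Fin k => p.1 j) List.length_ofFn ?_
    exact ⟨tau^[k] p, mem_image_of_mem _ hp, tildeσW_ofFn_iterate_tau k (hGt hp)⟩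
  · intro hp
    obtain ⟨w, rfl, _, ⟨q, hq, rfl⟩, rfl⟩ := mem_iUnion₂.1 hp
    exact hG q hq w

end Robust

theorem stmt_19_general {n : ℕ} {X : Type*}
    (σ : Fin n → X → X)
    (F : Set ((ℕ → Fin n) × (ℕ → X))) (hF : F ⊆ Tails σ)
    (hFrob : Robust σ F) :
    ∀ k : ℕ, Robust σ (tau^[k] '' F) ∧
      tau^[k] '' F = (⋃ i, tildeσ σ i '' (tau^[k + 1] '' F)) ∧
      tau^[k + 1] '' F = tau '' (tau^[k] '' F) ∧
      F = ⋃ w ∈ {w : List (Fin n) | w.length = k},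
        tildeσW σ w '' (tau^[k] '' F) := by
  intro k
  have hrob := hFrob.image_iterate_tau k
  have htails : tau^[k] '' F ⊆ Tails σ :=
    image_subset_iff.2 fun p hp => iterate_tau_mem_tails (hF hp) k
  have hsucc : tau^[k + 1] '' F = tau '' (tau^[k] '' F) := by
    rw [Function.iterate_succ', image_comp]
  refine ⟨hrob, ?_, hsucc, hFrob.eq_biUnion_tildeσW_image_iterate_tau hF k⟩
  rw [hsucc]
  exact hrob.eq_iUnion_tildeσ_image_tau htails

/-- If `F ⊆ X̃` is a closed invariant set that is robust and `τ`-invariant,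
and `F_k = τ^k(F)`, then each `F_k` is robust and satisfies
`F_k = ⋃ᵢ σ̃ᵢ(F_{k+1})` and `F_{k+1} = τ(F_k)`; moreover
`F = ⋃_{|w|=k} σ̃_w(F_k)` for each `k`. -/
theorem stmt_19 {n : ℕ} {X : Type*} [TopologicalSpace X] [T2Space X]
    [LocallyCompactSpace X] (σ : Fin n → X → X) (hσ : ∀ i, Continuous (σ i))
    (hsurj : ∀ x : X, ∃ i y, σ i y = x)
    (F : Set ((ℕ → Fin n) × (ℕ → X))) (hF : F ⊆ Tails σ) (hFcl : IsClosed F)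
    (hFinv : ∀ i, tildeσ σ i '' F ⊆ F) (hFrob : Robust σ F)
    (hFtau : tau '' F ⊆ F) :
    ∀ k : ℕ, Robust σ (tau^[k] '' F) ∧
      tau^[k] '' F = (⋃ i, tildeσ σ i '' (tau^[k + 1] '' F)) ∧
      tau^[k + 1] '' F = tau '' (tau^[k] '' F) ∧
      F = ⋃ w ∈ {w : List (Fin n) | w.length = k},
        tildeσW σ w '' (tau^[k] '' F) :=
  stmt_19_general σ F hF hFrob
end
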